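/- arXiv:2306.04160 — 3 statements merged into one kernel-verified Lean document; each statement's English description precedes it below -/
import Mathlib

section
/- Let Y_L ∈ ℝ^{n_L×r} be a row-stochastic matrix (each row sums to 1). With T as defined, the noisy label similarity matrix A*_L := (Y_L T)(Y_L T)^⊤ satisfies A*_L = α·Y_L Y_L^⊤ + β·1_{n_L} 1_{n_L}^⊤, where α = (1 - rγ/(r-1))² and β = (γ/(r-1))·(2 - rγ/(r-1)), and 1_{n_L} is the all-ones column vector. -/
/-!
With `c = γ / (r - 1)` and `J` the all-ones matrix, `T = (1 - γ - c) • 1 + c • J`. A row-stochastic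
`Y` satisfies `Y * J = J`, so `Y * T = a • Y + c • J` with `a = 1 - r c`, and expanding its Gram
matrix with `Y * Jᵀ = J` and `J * Jᵀ = r • J` gives `a² • Y * Yᵀ + c (2a + r c) • J`.
-/

open Matrix

namespace Matrix

variable {R l m n : Type*} [CommRing R]

theorem mul_of_one_eq_of_one [Fintype m] {Y : Matrix l m R} (hY : ∀ i, ∑ j, Y i j = 1) :
    Y * (of fun _ _ => (1 : R) : Matrix m n R) = of fun _ _ => 1 := by
  ext i k
  simp [mul_apply, hY]

theorem of_one_mul_of_one [Fintype m] :
    (of fun _ _ => (1 : R) : Matrix l m R) * (of fun _ _ => (1 : R) : Matrix m n R)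
      = (Fintype.card m : R) • of fun _ _ => 1 := by
  ext i k
  simp [mul_apply]

theorem of_ite_eq [DecidableEq n] (d c : R) :
    (of fun i j => if i = j then d else c : Matrix n n R)
      = (d - c) • (1 : Matrix n n R) + c • of fun _ _ => 1 := by
  ext i j
  by_cases h : i = j <;> simp [h]

theorem gram_smul_add_smul_of_one [Fintype m] {Y : Matrix l m R} (hY : ∀ i, ∑ j, Y i j = 1)
    (a c : R) :
    (a • Y + c • of fun _ _ => 1) * (a • Y + c • of fun _ _ => 1)ᵀ
      = a ^ 2 • (Y * Yᵀ) + (c * (2 * a + Fintype.card m * c)) • of fun _ _ => 1 := by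
  have hJt : (of fun _ _ => (1 : R) : Matrix l m R)ᵀ = of fun _ _ => 1 := rfl
  have hYJ : Y * (of fun _ _ => (1 : R) : Matrix m l R) = of fun _ _ => 1 :=
    mul_of_one_eq_of_one hY
  have hJY : (of fun _ _ => (1 : R) : Matrix l m R) * Yᵀ = of fun _ _ => 1 := by
    ext i k
    simp [mul_apply, hY]
  simp only [transpose_add, transpose_smul, hJt, Matrix.add_mul, Matrix.mul_add, Matrix.smul_mul,
    Matrix.mul_smul, hYJ, hJY, of_one_mul_of_one]
  module

end Matrix

theorem noisy_similarity_graph_general (r nL : ℕ) (hr : 2 ≤ r)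
    (γ : ℝ)
    (T : Matrix (Fin r) (Fin r) ℝ)
    (hT : ∀ i j, T i j = if i = j then 1 - γ else γ / ((r : ℝ) - 1))
    (Y : Matrix (Fin nL) (Fin r) ℝ)
    (hY1 : ∀ i, ∑ j, Y i j = 1) :
    (Y * T) * (Y * T)ᵀ
      = ((1 - (r : ℝ) * γ / ((r : ℝ) - 1)) ^ 2) • (Y * Yᵀ)
        + ((γ / ((r : ℝ) - 1)) * (2 - (r : ℝ) * γ / ((r : ℝ) - 1)))
            • (Matrix.of fun _ _ => (1 : ℝ)) := by
  have hr1 : (r : ℝ) - 1 ≠ 0 := by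
    have : (2 : ℝ) ≤ r := by exact_mod_cast hr
    linarith
  -- writing `γ = (r - 1) c` makes every coefficient polynomial in `c`
  obtain ⟨c, rfl⟩ : ∃ c, γ = ((r : ℝ) - 1) * c := ⟨γ / ((r : ℝ) - 1), by field_simp⟩
  simp only [mul_div_assoc, mul_div_cancel_left₀ _ hr1] at hT ⊢
  have hYT : Y * T = (1 - r * c) • Y + c • of fun _ _ => 1 := by
    rw [show T = of fun i j => if i = j then 1 - (r - 1) * c else c from ext hT, of_ite_eq,
      Matrix.mul_add, Matrix.mul_smul, Matrix.mul_one, Matrix.mul_smul, mul_of_one_eq_of_one hY1]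
    congr 2
    ring
  rw [hYT, gram_smul_add_smul_of_one hY1, Fintype.card_fin]
  congr 2
  ring

/-- For a row-stochastic posterior matrix `Y_L` and the symmetric-noise
transition matrix `T`, the noisy label similarity matrix `(Y_L T)(Y_L T)ᵀ` equals
`α • Y_L Y_Lᵀ + β • 1 1ᵀ`. -/
theorem noisy_similarity_graph (r nL : ℕ) (hr : 2 ≤ r) (hnL : 1 ≤ nL)
    (γ : ℝ) (hγ0 : 0 ≤ γ) (hγ1 : γ < 1)
    (T : Matrix (Fin r) (Fin r) ℝ)
    (hT : ∀ i j, T i j = if i = j then 1 - γ else γ / ((r : ℝ) - 1))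
    (Y : Matrix (Fin nL) (Fin r) ℝ)
    (hY0 : ∀ i j, 0 ≤ Y i j)
    (hY1 : ∀ i, ∑ j, Y i j = 1) :
    (Y * T) * (Y * T)ᵀ
      = ((1 - (r : ℝ) * γ / ((r : ℝ) - 1)) ^ 2) • (Y * Yᵀ)
        + ((γ / ((r : ℝ) - 1)) * (2 - (r : ℝ) * γ / ((r : ℝ) - 1)))
            • (Matrix.of fun _ _ => (1 : ℝ)) :=
  noisy_similarity_graph_general r nL hr γ T hT Y hY1
end

section
/- For two real symmetric n×n matrices A and B with eigenvalues (in descending order) a_1 ≥ … ≥ a_n and b_1 ≥ … ≥ b_n respectively, the (k+1)-th largest eigenvalue λ_{k+1} of A + B satisfies max_{i+j = n+k+2, i,j ≥ 1} (a_i + b_j) ≤ λ_{k+1} ≤ min_{i+j = k+2, i,j ≥ 1} (a_i + b_j). -/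
/-!
Weyl's inequalities by dimension counting. If `u` is an orthonormal family of eigenvectors of
`T` with eigenvalues `d`, the Rayleigh quotient `⟪T x, x⟫ / ‖x‖²` of a vector in the span of the
`u i`, `i ∈ s`, lies between the smallest and the largest `d i`, `i ∈ s`. For `c k ≤ a i + b j`
with `i + j = k`, the spans of the eigenvectors of `A` with indices `≥ i`, of `B` with indices
`≥ j` and of `A + B` with indices `≤ k` have dimensions adding up to `2n + 1`, so they share a
nonzero vector `x`, and `c k ‖x‖² ≤ ⟪(A + B) x, x⟫ = ⟪A x, x⟫ + ⟪B x, x⟫ ≤ (a i + b j) ‖x‖²`.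
The other inequality is the same argument applied to `-A` and `-B`.
-/

open Finset Module Submodule
open scoped RealInnerProductSpace

section Rayleigh

variable {ι E : Type*} [NormedAddCommGroup E] [InnerProductSpace ℝ E]
  {u : ι → E} {T : E →ₗ[ℝ] E} {d : ι → ℝ} {s : Finset ι} {x : E} {r : ℝ}

theorem Orthonormal.exists_inner_map_self_eq_sum (hu : Orthonormal ℝ u)
    (hT : ∀ i, T (u i) = d i • u i) (hx : x ∈ span ℝ (u '' s)) :
    ∃ c : ι → ℝ, ⟪T x, x⟫ = ∑ i ∈ s, d i * c i ^ 2 ∧ ‖x‖ ^ 2 = ∑ i ∈ s, c i ^ 2 := by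
  obtain ⟨c, rfl⟩ := (mem_span_image_finset_iff_exists_fun' ℝ).1 hx
  have hTx : T (∑ i ∈ s, c i • u i) = ∑ i ∈ s, (d i * c i) • u i := by
    simp only [map_sum, map_smul, hT, smul_smul, mul_comm]
  refine ⟨c, ?_, ?_⟩
  · rw [hTx, hu.inner_sum]
    exact sum_congr rfl fun i _ => by simp only [conj_trivial]; ring
  · rw [← real_inner_self_eq_norm_sq, hu.inner_sum]
    exact sum_congr rfl fun i _ => by simp only [conj_trivial]; ring

theorem Orthonormal.inner_map_self_le_of_mem_span (hu : Orthonormal ℝ u)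
    (hT : ∀ i, T (u i) = d i • u i) (hd : ∀ i ∈ s, d i ≤ r) (hx : x ∈ span ℝ (u '' s)) :
    ⟪T x, x⟫ ≤ r * ‖x‖ ^ 2 := by
  obtain ⟨c, hTx, hx⟩ := hu.exists_inner_map_self_eq_sum hT hx
  rw [hTx, hx, mul_sum]
  exact sum_le_sum fun i hi => mul_le_mul_of_nonneg_right (hd i hi) (sq_nonneg _)

theorem Orthonormal.le_inner_map_self_of_mem_span (hu : Orthonormal ℝ u)
    (hT : ∀ i, T (u i) = d i • u i) (hd : ∀ i ∈ s, r ≤ d i) (hx : x ∈ span ℝ (u '' s)) :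
    r * ‖x‖ ^ 2 ≤ ⟪T x, x⟫ := by
  obtain ⟨c, hTx, hx⟩ := hu.exists_inner_map_self_eq_sum hT hx
  rw [hTx, hx, mul_sum]
  exact sum_le_sum fun i hi => mul_le_mul_of_nonneg_right (hd i hi) (sq_nonneg _)

theorem Orthonormal.finrank_span_image_finset (hu : Orthonormal ℝ u) (s : Finset ι) :
    finrank ℝ (span ℝ (u '' s)) = #s := by
  rw [Set.image_eq_range, ← Fintype.card_coe]
  exact finrank_span_eq_card (hu.linearIndependent.comp _ Subtype.val_injective)

end Rayleigh

theorem Submodule.exists_ne_zero_mem_inf_inf {K V : Type*} [DivisionRing K] [AddCommGroup V]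
    [Module K V] [FiniteDimensional K V] (U₁ U₂ U₃ : Submodule K V)
    (h : 2 * finrank K V < finrank K U₁ + finrank K U₂ + finrank K U₃) :
    ∃ x ∈ U₁ ⊓ U₂ ⊓ U₃, x ≠ 0 := by
  have h₁₂ := finrank_sup_add_finrank_inf_eq U₁ U₂
  have h₁₂₃ := finrank_sup_add_finrank_inf_eq (U₁ ⊓ U₂) U₃
  have := (U₁ ⊔ U₂).finrank_le
  have := ((U₁ ⊓ U₂) ⊔ U₃).finrank_le
  exact (U₁ ⊓ U₂ ⊓ U₃).exists_mem_ne_zero_of_ne_bot fun hbot => by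
    rw [hbot, finrank_bot] at h₁₂₃
    omega

section Weyl

variable {ι₁ ι₂ ι₃ E : Type*} [NormedAddCommGroup E] [InnerProductSpace ℝ E]
  [FiniteDimensional ℝ E] {S T : E →ₗ[ℝ] E} {u₁ : ι₁ → E} {u₂ : ι₂ → E} {u₃ : ι₃ → E}
  {a : ι₁ → ℝ} {b : ι₂ → ℝ} {c : ι₃ → ℝ} {s₁ : Finset ι₁} {s₂ : Finset ι₂} {s₃ : Finset ι₃}
  {α β γ : ℝ}

theorem le_add_of_eigenvectors_of_finrank_lt (h₁ : Orthonormal ℝ u₁) (h₂ : Orthonormal ℝ u₂)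
    (h₃ : Orthonormal ℝ u₃) (hS : ∀ i, S (u₁ i) = a i • u₁ i) (hT : ∀ i, T (u₂ i) = b i • u₂ i)
    (hST : ∀ i, (S + T) (u₃ i) = c i • u₃ i) (hcard : 2 * finrank ℝ E < #s₁ + #s₂ + #s₃)
    (ha : ∀ i ∈ s₁, a i ≤ α) (hb : ∀ i ∈ s₂, b i ≤ β) (hc : ∀ i ∈ s₃, γ ≤ c i) :
    γ ≤ α + β := by
  obtain ⟨x, ⟨⟨hx₁, hx₂⟩, hx₃⟩, hx₀⟩ := exists_ne_zero_mem_inf_inf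
    (span ℝ (u₁ '' s₁)) (span ℝ (u₂ '' s₂)) (span ℝ (u₃ '' s₃))
    (by rwa [h₁.finrank_span_image_finset, h₂.finrank_span_image_finset,
      h₃.finrank_span_image_finset])
  have hSx := h₁.inner_map_self_le_of_mem_span hS ha hx₁
  have hTx := h₂.inner_map_self_le_of_mem_span hT hb hx₂
  have hSTx := h₃.le_inner_map_self_of_mem_span hST hc hx₃
  rw [LinearMap.add_apply, inner_add_left] at hSTx
  have hx : 0 < ‖x‖ ^ 2 := by positivity
  nlinarith

theorem add_le_of_eigenvectors_of_finrank_lt (h₁ : Orthonormal ℝ u₁) (h₂ : Orthonormal ℝ u₂)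
    (h₃ : Orthonormal ℝ u₃) (hS : ∀ i, S (u₁ i) = a i • u₁ i) (hT : ∀ i, T (u₂ i) = b i • u₂ i)
    (hST : ∀ i, (S + T) (u₃ i) = c i • u₃ i) (hcard : 2 * finrank ℝ E < #s₁ + #s₂ + #s₃)
    (ha : ∀ i ∈ s₁, α ≤ a i) (hb : ∀ i ∈ s₂, β ≤ b i) (hc : ∀ i ∈ s₃, c i ≤ γ) :
    α + β ≤ γ := by
  have := le_add_of_eigenvectors_of_finrank_lt (S := -S) (T := -T) (a := -a) (b := -b)
    (c := -c) h₁ h₂ h₃ (by simp [hS]) (by simp [hT])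
    (fun i => by rw [← neg_add, LinearMap.neg_apply, hST, Pi.neg_apply, neg_smul]) hcard
    (fun i hi => neg_le_neg (ha i hi)) (fun i hi => neg_le_neg (hb i hi))
    (fun i hi => neg_le_neg (hc i hi))
  linarith

end Weyl

theorem Matrix.IsHermitian.exists_orthonormal_eigenvectors {m : Type*} [Fintype m]
    [DecidableEq m] {A : Matrix m m ℝ} (hA : A.IsHermitian) {a : m → ℝ}
    (ha : ∃ σ : Equiv.Perm m, hA.eigenvalues = a ∘ σ) :
    ∃ u : m → EuclideanSpace ℝ m, Orthonormal ℝ u ∧ ∀ i, toEuclideanLin A (u i) = a i • u i := by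
  obtain ⟨σ, hσ⟩ := ha
  refine ⟨hA.eigenvectorBasis ∘ σ.symm, hA.eigenvectorBasis.orthonormal.comp _ σ.symm.injective,
    fun i => WithLp.ofLp_injective 2 ?_⟩
  simpa [hσ, toLpLin_apply] using hA.mulVec_eigenvectorBasis (σ.symm i)

/-- Weyl inequalities: for real symmetric `A`, `B` with eigenvalues
(descending) `a`, `b`, and `c` the descending eigenvalues of `A + B`, the
`(k+1)`-th largest eigenvalue `c_k` (0-indexed) satisfies
`a_i + b_j ≤ c_k` whenever `i + j = n + k` and `c_k ≤ a_i + b_j` whenever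
`i + j = k` (all indices 0-indexed). -/
theorem weyl_inequalities (n : ℕ) (A B : Matrix (Fin n) (Fin n) ℝ)
    (hA : A.IsHermitian) (hB : B.IsHermitian) (hAB : (A + B).IsHermitian)
    (a b c : Fin n → ℝ)
    (haa : Antitone a) (hba : Antitone b) (hca : Antitone c)
    (hae : ∃ σ : Equiv.Perm (Fin n), hA.eigenvalues = a ∘ σ)
    (hbe : ∃ σ : Equiv.Perm (Fin n), hB.eigenvalues = b ∘ σ)
    (hce : ∃ σ : Equiv.Perm (Fin n), hAB.eigenvalues = c ∘ σ)
    (k : Fin n) :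
    (∀ i j : Fin n, (i : ℕ) + (j : ℕ) = n + (k : ℕ) → a i + b j ≤ c k) ∧
      (∀ i j : Fin n, (i : ℕ) + (j : ℕ) = (k : ℕ) → c k ≤ a i + b j) := by
  obtain ⟨uA, huA, hA⟩ := hA.exists_orthonormal_eigenvectors hae
  obtain ⟨uB, huB, hB⟩ := hB.exists_orthonormal_eigenvectors hbe
  obtain ⟨uC, huC, hC⟩ := hAB.exists_orthonormal_eigenvectors hce
  rw [map_add] at hC
  have hk := k.isLt
  refine ⟨fun i j hij => ?_, fun i j hij => ?_⟩
  · refine add_le_of_eigenvectors_of_finrank_lt (s₁ := Iic i) (s₂ := Iic j) (s₃ := Ici k)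
      huA huB huC hA hB hC ?_ (fun l hl => haa (mem_Iic.1 hl)) (fun l hl => hba (mem_Iic.1 hl))
      (fun l hl => hca (mem_Ici.1 hl))
    rw [finrank_euclideanSpace_fin, Fin.card_Iic, Fin.card_Iic, Fin.card_Ici]
    omega
  · refine le_add_of_eigenvectors_of_finrank_lt (s₁ := Ici i) (s₂ := Ici j) (s₃ := Iic k)
      huA huB huC hA hB hC ?_ (fun l hl => haa (mem_Ici.1 hl)) (fun l hl => hba (mem_Ici.1 hl))
      (fun l hl => hca (mem_Iic.1 hl))
    rw [finrank_euclideanSpace_fin, Fin.card_Ici, Fin.card_Ici, Fin.card_Iic]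
    omega
end

section
/- In the setting above, for any k ≥ n_U + r (with k + 1 ≤ n), the eigenvalue λ_{k+1} of (1-θ)A₀ + θĀ* satisfies (1-θ)ν_{k+1} ≤ λ_{k+1} ≤ min{θ + (1-θ)ν_{k+1}, θα + (1-θ)ν_{k-n_U}, (1-θ)ν_{k+1-r-n_U}}. -/
/-!
Both bounds are Weyl-type inequalities for `C = s • A + t • B` with `s, t ≥ 0`, proved by
dimension counting: the eigenvectors of `C` for its `k + 1` largest eigenvalues, those of `A`
for all but its `i` largest and those of `B` for all but its `j` largest span subspaces whose
dimensions add up to more than `2n` when `i + j = k`, so they share a nonzero vector `x`, and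
comparing Rayleigh quotients at `x` gives `λ_k(C) ≤ s λ_i(A) + t λ_j(B)`. Likewise, when `B` is
positive semidefinite, `s λ_k(A) ≤ λ_k(C)`. The sorted spectrum of `Ā*` is `1` at index `0`,
`α` at index `n_U + 1` and `0` at index `n_U + r`; taking `j` to be these three indices gives
the three upper bounds, and `Ā* ⪰ 0` gives the lower bound.
-/

open Matrix Module Submodule
open scoped RealInnerProductSpace

section FinrankInf

variable {K V : Type*} [DivisionRing K] [AddCommGroup V] [Module K V] [FiniteDimensional K V]

theorem Submodule.finrank_add_finrank_le_finrank_inf_add (U W : Submodule K V) :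
    finrank K U + finrank K W ≤ finrank K ↥(U ⊓ W) + finrank K V := by
  rw [← finrank_sup_add_finrank_inf_eq]
  have := (U ⊔ W).finrank_le
  omega

theorem Submodule.exists_mem_inf_ne_zero_of_finrank_lt (U W : Submodule K V)
    (h : finrank K V < finrank K U + finrank K W) : ∃ x ∈ U ⊓ W, x ≠ 0 := by
  refine (U ⊓ W).ne_bot_iff.mp fun hbot => ?_
  have := U.finrank_add_finrank_le_finrank_inf_add W
  rw [hbot, finrank_bot] at this
  omega

end FinrankInf

namespace Matrix.IsHermitian

section Spectral

variable {ι : Type*} [Fintype ι] [DecidableEq ι] {A : Matrix ι ι ℝ} (hA : A.IsHermitian)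

theorem inner_eigenvectorBasis_toEuclideanLin (j : ι) (x : EuclideanSpace ℝ ι) :
    ⟪hA.eigenvectorBasis j, toEuclideanLin A x⟫ =
      hA.eigenvalues j * ⟪hA.eigenvectorBasis j, x⟫ := by
  have heig : toEuclideanLin A (hA.eigenvectorBasis j) =
      hA.eigenvalues j • hA.eigenvectorBasis j := by
    ext i
    simpa [toLpLin_apply] using congr_fun (hA.mulVec_eigenvectorBasis j) i
  rw [← isSymmetric_toEuclideanLin_iff.mpr hA, heig, real_inner_smul_left]

theorem inner_toEuclideanLin_self_eq_sum (x : EuclideanSpace ℝ ι) :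
    ⟪x, toEuclideanLin A x⟫ = ∑ j, hA.eigenvalues j * ⟪hA.eigenvectorBasis j, x⟫ ^ 2 := by
  rw [← hA.eigenvectorBasis.sum_inner_mul_inner]
  refine Finset.sum_congr rfl fun j _ => ?_
  rw [hA.inner_eigenvectorBasis_toEuclideanLin, real_inner_comm]
  ring

theorem inner_eigenvectorBasis_eq_zero_of_mem_span {S : Set ι} {x : EuclideanSpace ℝ ι}
    (hx : x ∈ span ℝ (hA.eigenvectorBasis '' S)) {j : ι} (hj : j ∉ S) :
    ⟪hA.eigenvectorBasis j, x⟫ = 0 := by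
  refine (mem_orthogonal_singleton_iff_inner_right).mp (span_le.mpr ?_ hx)
  rintro _ ⟨i, hi, rfl⟩
  exact mem_orthogonal_singleton_iff_inner_right.mpr
    (hA.eigenvectorBasis.orthonormal.2 (ne_of_mem_of_not_mem hi hj).symm)

theorem inner_toEuclideanLin_self_le_of_mem_span {S : Set ι} {c : ℝ}
    (hc : ∀ j ∈ S, hA.eigenvalues j ≤ c) {x : EuclideanSpace ℝ ι}
    (hx : x ∈ span ℝ (hA.eigenvectorBasis '' S)) :
    ⟪x, toEuclideanLin A x⟫ ≤ c * ‖x‖ ^ 2 := by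
  rw [hA.inner_toEuclideanLin_self_eq_sum, ← hA.eigenvectorBasis.sum_sq_inner_right,
    Finset.mul_sum]
  refine Finset.sum_le_sum fun j _ => ?_
  by_cases hj : j ∈ S
  · exact mul_le_mul_of_nonneg_right (hc j hj) (sq_nonneg _)
  · simp [hA.inner_eigenvectorBasis_eq_zero_of_mem_span hx hj]

theorem le_inner_toEuclideanLin_self_of_mem_span {S : Set ι} {c : ℝ}
    (hc : ∀ j ∈ S, c ≤ hA.eigenvalues j) {x : EuclideanSpace ℝ ι}
    (hx : x ∈ span ℝ (hA.eigenvectorBasis '' S)) :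
    c * ‖x‖ ^ 2 ≤ ⟪x, toEuclideanLin A x⟫ := by
  rw [hA.inner_toEuclideanLin_self_eq_sum, ← hA.eigenvectorBasis.sum_sq_inner_right,
    Finset.mul_sum]
  refine Finset.sum_le_sum fun j _ => ?_
  by_cases hj : j ∈ S
  · exact mul_le_mul_of_nonneg_right (hc j hj) (sq_nonneg _)
  · simp [hA.inner_eigenvectorBasis_eq_zero_of_mem_span hx hj]

theorem inner_toEuclideanLin_self_nonneg (h : ∀ j, 0 ≤ hA.eigenvalues j)
    (x : EuclideanSpace ℝ ι) : 0 ≤ ⟪x, toEuclideanLin A x⟫ := by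
  rw [hA.inner_toEuclideanLin_self_eq_sum]
  exact Finset.sum_nonneg fun j _ => mul_nonneg (h j) (sq_nonneg _)

theorem finrank_span_eigenvectorBasis_image (S : Finset ι) :
    finrank ℝ (span ℝ (hA.eigenvectorBasis '' S)) = S.card := by
  rw [Set.image_eq_range]
  exact (finrank_span_eq_card
    (hA.eigenvectorBasis.orthonormal.linearIndependent.comp _ Subtype.val_injective)).trans
    (by simp)

end Spectral

section Sorted

variable {n : ℕ} {A : Matrix (Fin n) (Fin n) ℝ} (hA : A.IsHermitian) {m : Fin n → ℝ}

theorem exists_finrank_add_ge_forall_inner_le (hm : Antitone m)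
    (hσ : ∃ σ : Equiv.Perm (Fin n), hA.eigenvalues = m ∘ σ) (t : Fin n) :
    ∃ W : Submodule ℝ (EuclideanSpace ℝ (Fin n)), n ≤ finrank ℝ W + t ∧
      ∀ x ∈ W, ⟪x, toEuclideanLin A x⟫ ≤ m t * ‖x‖ ^ 2 := by
  obtain ⟨σ, hσ⟩ := hσ
  set S := (Finset.Ici t).map σ.symm.toEmbedding
  refine ⟨span ℝ (hA.eigenvectorBasis '' ↑S), ?_, fun x hx => ?_⟩
  · rw [hA.finrank_span_eigenvectorBasis_image, Finset.card_map, Fin.card_Ici]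
    omega
  · refine hA.inner_toEuclideanLin_self_le_of_mem_span (fun j hj => ?_) hx
    rw [hσ]
    exact hm (by simpa [S] using hj)

theorem exists_lt_finrank_forall_le_inner (hm : Antitone m)
    (hσ : ∃ σ : Equiv.Perm (Fin n), hA.eigenvalues = m ∘ σ) (t : Fin n) :
    ∃ W : Submodule ℝ (EuclideanSpace ℝ (Fin n)), (t : ℕ) < finrank ℝ W ∧
      ∀ x ∈ W, m t * ‖x‖ ^ 2 ≤ ⟪x, toEuclideanLin A x⟫ := by
  obtain ⟨σ, hσ⟩ := hσ
  set S := (Finset.Iic t).map σ.symm.toEmbedding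
  refine ⟨span ℝ (hA.eigenvectorBasis '' ↑S), ?_, fun x hx => ?_⟩
  · rw [hA.finrank_span_eigenvectorBasis_image, Finset.card_map, Fin.card_Iic]
    omega
  · refine hA.le_inner_toEuclideanLin_self_of_mem_span (fun j hj => ?_) hx
    rw [hσ]
    exact hm (by simpa [S] using hj)

end Sorted

end Matrix.IsHermitian

namespace Matrix

theorem inner_toEuclideanLin_smul_add_smul_self {ι : Type*} [Fintype ι] [DecidableEq ι]
    (s t : ℝ) (A B : Matrix ι ι ℝ) (x : EuclideanSpace ℝ ι) :
    ⟪x, toEuclideanLin (s • A + t • B) x⟫ =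
      s * ⟪x, toEuclideanLin A x⟫ + t * ⟪x, toEuclideanLin B x⟫ := by
  simp [inner_add_right, real_inner_smul_right]

variable {n : ℕ} {A B : Matrix (Fin n) (Fin n) ℝ} {s t : ℝ}
  (hA : A.IsHermitian) (hB : B.IsHermitian) (hC : (s • A + t • B).IsHermitian)
  {a b c : Fin n → ℝ}

theorem weyl_smul_add_smul_le (hs : 0 ≤ s) (ht : 0 ≤ t)
    (ha : Antitone a) (hσa : ∃ σ : Equiv.Perm (Fin n), hA.eigenvalues = a ∘ σ)
    (hb : Antitone b) (hσb : ∃ σ : Equiv.Perm (Fin n), hB.eigenvalues = b ∘ σ)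
    (hc : Antitone c) (hσc : ∃ σ : Equiv.Perm (Fin n), hC.eigenvalues = c ∘ σ)
    (i j k : Fin n) (hijk : (i : ℕ) + j = k) :
    c k ≤ s * a i + t * b j := by
  obtain ⟨WC, hWC, hC_ge⟩ := hC.exists_lt_finrank_forall_le_inner hc hσc k
  obtain ⟨WA, hWA, hA_le⟩ := hA.exists_finrank_add_ge_forall_inner_le ha hσa i
  obtain ⟨WB, hWB, hB_le⟩ := hB.exists_finrank_add_ge_forall_inner_le hb hσb j
  have hdim := WC.finrank_add_finrank_le_finrank_inf_add WA
  rw [finrank_euclideanSpace_fin] at hdim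
  obtain ⟨x, ⟨⟨hxC, hxA⟩, hxB⟩, hx0⟩ :=
    (WC ⊓ WA).exists_mem_inf_ne_zero_of_finrank_lt WB (by rw [finrank_euclideanSpace_fin]; omega)
  have hx : 0 < ‖x‖ ^ 2 := by positivity
  refine le_of_mul_le_mul_right ?_ hx
  calc c k * ‖x‖ ^ 2 ≤ ⟪x, toEuclideanLin (s • A + t • B) x⟫ := hC_ge x hxC
    _ = s * ⟪x, toEuclideanLin A x⟫ + t * ⟪x, toEuclideanLin B x⟫ :=
      inner_toEuclideanLin_smul_add_smul_self s t A B x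
    _ ≤ s * (a i * ‖x‖ ^ 2) + t * (b j * ‖x‖ ^ 2) := by
      gcongr
      exacts [hA_le x hxA, hB_le x hxB]
    _ = (s * a i + t * b j) * ‖x‖ ^ 2 := by ring

theorem smul_le_smul_add_smul_of_eigenvalues_nonneg (hs : 0 ≤ s) (ht : 0 ≤ t)
    (hB0 : ∀ j, 0 ≤ hB.eigenvalues j)
    (ha : Antitone a) (hσa : ∃ σ : Equiv.Perm (Fin n), hA.eigenvalues = a ∘ σ)
    (hc : Antitone c) (hσc : ∃ σ : Equiv.Perm (Fin n), hC.eigenvalues = c ∘ σ)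
    (k : Fin n) : s * a k ≤ c k := by
  obtain ⟨WA, hWA, hA_ge⟩ := hA.exists_lt_finrank_forall_le_inner ha hσa k
  obtain ⟨WC, hWC, hC_le⟩ := hC.exists_finrank_add_ge_forall_inner_le hc hσc k
  obtain ⟨x, ⟨hxA, hxC⟩, hx0⟩ := WA.exists_mem_inf_ne_zero_of_finrank_lt WC
    (by rw [finrank_euclideanSpace_fin]; omega)
  have hx : 0 < ‖x‖ ^ 2 := by positivity
  refine le_of_mul_le_mul_right ?_ hx
  calc s * a k * ‖x‖ ^ 2 ≤ s * ⟪x, toEuclideanLin A x⟫ := by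
        rw [mul_assoc]; exact mul_le_mul_of_nonneg_left (hA_ge x hxA) hs
    _ ≤ s * ⟪x, toEuclideanLin A x⟫ + t * ⟪x, toEuclideanLin B x⟫ :=
      le_add_of_nonneg_right (mul_nonneg ht (hB.inner_toEuclideanLin_self_nonneg hB0 x))
    _ = ⟪x, toEuclideanLin (s • A + t • B) x⟫ :=
      (inner_toEuclideanLin_smul_add_smul_self s t A B x).symm
    _ ≤ c k * ‖x‖ ^ 2 := hC_le x hxC

end Matrix

theorem antitone_ite_one_ite_zero {n p q : ℕ} {α : ℝ} (hα0 : 0 ≤ α) (hα1 : α ≤ 1) :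
    Antitone fun i : Fin n =>
      if (i : ℕ) < p then (1 : ℝ) else if (i : ℕ) < q then α else 0 := by
  intro i j hij
  have : (i : ℕ) ≤ j := hij
  dsimp only
  split_ifs <;> first | rfl | linarith

-- Indices are 0-based: the paper's `λ_{k+1}, ν_{k+1}, ν_{k-n_U}, ν_{k+1-r-n_U}` are
-- `lam k, ν k, ν (k-n_U-1), ν (k-r-n_U)`.
/-- eigenvalue bounds for the mixture `(1-θ)A₀ + θĀ*` when
`k ≥ n_U + r` (and `k+1 ≤ n`). Paper indices are 1-indexed; here 0-indexed:
`λ_{k+1} = lam k`, `ν_{k+1} = ν k`, `ν_{k-n_U} = ν (k-n_U-1)`,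
`ν_{k+1-r-n_U} = ν (k-r-n_U)`. -/
theorem mixture_eigenvalue_bounds_large_k (r nU n : ℕ) (hr : 2 ≤ r)
    (θ α : ℝ) (hθ0 : 0 ≤ θ) (hθ1 : θ ≤ 1) (hα0 : 0 < α) (hα1 : α ≤ 1)
    (A0 : Matrix (Fin n) (Fin n) ℝ) (hA0 : A0.IsHermitian)
    (ν : Fin n → ℝ) (hνa : Antitone ν)
    (hνe : ∃ σ : Equiv.Perm (Fin n), hA0.eigenvalues = ν ∘ σ)
    (Astar : Matrix (Fin n) (Fin n) ℝ) (hAs : Astar.IsHermitian)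
    (hspec : ∃ σ : Equiv.Perm (Fin n), hAs.eigenvalues =
      (fun i : Fin n => if (i : ℕ) < nU + 1 then (1 : ℝ)
        else if (i : ℕ) < nU + r then α else 0) ∘ σ)
    (hmix : ((1 - θ) • A0 + θ • Astar).IsHermitian)
    (lam : Fin n → ℝ) (hlama : Antitone lam)
    (hlame : ∃ σ : Equiv.Perm (Fin n), hmix.eigenvalues = lam ∘ σ)
    (k : ℕ) (hk : nU + r ≤ k) (hkn : k + 1 ≤ n) :
    (1 - θ) * ν ⟨k, by omega⟩ ≤ lam ⟨k, by omega⟩ ∧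
    lam ⟨k, by omega⟩ ≤ θ + (1 - θ) * ν ⟨k, by omega⟩ ∧
    lam ⟨k, by omega⟩ ≤ θ * α + (1 - θ) * ν ⟨k - nU - 1, by omega⟩ ∧
    lam ⟨k, by omega⟩ ≤ (1 - θ) * ν ⟨k - r - nU, by omega⟩ := by
  have hθ : 0 ≤ 1 - θ := by linarith
  have hpat := antitone_ite_one_ite_zero (n := n) (p := nU + 1) (q := nU + r) hα0.le hα1
  have hAs0 : ∀ j, 0 ≤ hAs.eigenvalues j := by
    obtain ⟨σ, hσ⟩ := hspec
    intro j
    rw [hσ, Function.comp_apply]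
    split_ifs <;> positivity
  have weyl := weyl_smul_add_smul_le hA0 hAs hmix hθ hθ0 hνa hνe hpat hspec hlama hlame
    (k := ⟨k, by omega⟩)
  refine ⟨smul_le_smul_add_smul_of_eigenvalues_nonneg hA0 hAs hmix hθ hθ0 hAs0 hνa hνe
    hlama hlame _, ?_, ?_, ?_⟩
  · have := weyl ⟨k, by omega⟩ ⟨0, by omega⟩ rfl
    rw [Fin.val_mk, if_pos (by omega)] at this
    linarith
  · have := weyl ⟨k - nU - 1, by omega⟩ ⟨nU + 1, by omega⟩ (by dsimp only; omega)
    rw [Fin.val_mk, if_neg (by omega), if_pos (by omega)] at this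
    linarith
  · have := weyl ⟨k - r - nU, by omega⟩ ⟨nU + r, by omega⟩ (by dsimp only; omega)
    rw [Fin.val_mk, if_neg (by omega), if_neg (by omega)] at this
    linarith
end
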